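/- arXiv:2601.14488 — 3 statements merged into one kernel-verified Lean document; each statement's English description precedes it below -/
import Mathlib

section
/- Let q be a natural number. Suppose {(x_c, y_c, w_c)}_{c=1}^C is a quadrature rule on the square sqr that is exact of degree q (∫_{sqr} r(x,y) dx dy = Σ_c w_c r(x_c, y_c) for every bivariate real polynomial r of total degree at most q), and {(z_e, v_e)}_{e=1}^E is a quadrature rule on (-1,1) exact of degree q+2 (∫_{-1}^{1} g = Σ_e v_e g(z_e) for every univariate polynomial g of degree at most q+2). Then for every real polynomial p in three variables of total degree at most q, writing α_e = (1 - z_e)/2, one has ∫_{pyr} p(x,y,z) dx dy dz = Σ_{e=1}^E Σ_{c=1}^C α_e² v_e w_c p(α_e x_c, α_e y_c, z_e); that is, the algebraic construction yields a quadrature rule exact of degree q on the pyramid. -/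
/-!
Slicing the pyramid at height `z` gives the square scaled by `α = (1 - z) / 2`, so
`∫_pyr p = ∫_{-1}^{1} α² ∫_sqr p(α x, α y, z)`. For fixed `z` the inner integrand is a
polynomial of degree `≤ q` in `(x, y)`, which the square rule integrates exactly; the result
`α(z)² ∑_c w_c p(α x_c, α y_c, z)` is a polynomial of degree `≤ q + 2` in `z`, which the
line rule integrates exactly.
-/

open MeasureTheory Set
open scoped Pointwise

def sqr : Set (ℝ × ℝ) := {u | |u.1| < 1 ∧ |u.2| < 1}

def pyr : Set (ℝ × ℝ × ℝ) :=
  {u | |u.2.2| < 1 ∧ |u.1| < (1 - u.2.2) / 2 ∧ |u.2.1| < (1 - u.2.2) / 2}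

theorem integral_prod_prod_symm {α β γ E : Type*} [MeasurableSpace α] [MeasurableSpace β]
    [MeasurableSpace γ] [NormedAddCommGroup E] [NormedSpace ℝ E] {μ : Measure α}
    {ν : Measure β} {ρ : Measure γ} [SFinite μ] [SFinite ν] [SFinite ρ]
    (F : α × β × γ → E) (hF : Integrable F (μ.prod (ν.prod ρ))) :
    ∫ u, F u ∂μ.prod (ν.prod ρ) = ∫ t, ∫ x, F (x.1, x.2, t) ∂μ.prod ν ∂ρ := by
  have assoc := measurePreserving_prodAssoc μ ν ρ
  rw [← assoc.integral_comp' (f := MeasurableEquiv.prodAssoc), integral_prod_symm]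
  · rfl
  · exact assoc.integrable_comp_emb MeasurableEquiv.prodAssoc.measurableEmbedding |>.mpr hF

theorem isOpen_pyr : IsOpen pyr := by
  simp only [pyr, ofPred_and]
  exact (isOpen_lt (by fun_prop) (by fun_prop)).inter
    ((isOpen_lt (by fun_prop) (by fun_prop)).inter (isOpen_lt (by fun_prop) (by fun_prop)))

theorem pyr_subset_Icc_prod : pyr ⊆ Icc (-1) 1 ×ˢ Icc (-1) 1 ×ˢ Icc (-1) 1 := by
  rintro ⟨x, y, t⟩ ⟨ht, hx, hy⟩
  rw [abs_lt] at ht hx hy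
  simp only [mem_prod, mem_Icc]
  refine ⟨⟨?_, ?_⟩, ⟨?_, ?_⟩, ?_, ?_⟩ <;> linarith

theorem Continuous.integrableOn_pyr {E : Type*} [NormedAddCommGroup E] {f : ℝ × ℝ × ℝ → E}
    (hf : Continuous f) : IntegrableOn f pyr :=
  (hf.continuousOn.integrableOn_compact
    (isCompact_Icc.prod (isCompact_Icc.prod isCompact_Icc))).mono_set pyr_subset_Icc_prod

theorem slice_pyr_eq_smul_sqr {t : ℝ} (ht : t ∈ Ioo (-1) 1) :
    {x : ℝ × ℝ | (x.1, x.2, t) ∈ pyr} = ((1 - t) / 2) • sqr := by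
  have hα : 0 < (1 - t) / 2 := by linarith [ht.2]
  ext x
  rw [mem_smul_set_iff_inv_smul_mem₀ hα.ne']
  simp only [pyr, sqr, mem_ofPred_eq, Prod.smul_fst, Prod.smul_snd, smul_eq_mul, abs_mul,
    abs_inv, abs_of_pos hα, inv_mul_lt_iff₀ hα, mul_one, abs_lt.2 ⟨ht.1, ht.2⟩, true_and]

theorem integral_indicator_pyr_slice {E : Type*} [NormedAddCommGroup E] [NormedSpace ℝ E]
    (f : ℝ × ℝ × ℝ → E) {t : ℝ} (ht : t ∈ Ioo (-1) 1) :
    ∫ x : ℝ × ℝ, pyr.indicator f (x.1, x.2, t) =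
      ((1 - t) / 2) ^ 2 • ∫ x in sqr, f ((1 - t) / 2 * x.1, (1 - t) / 2 * x.2, t) := by
  have hα : 0 < (1 - t) / 2 := by linarith [ht.2]
  have hslice : MeasurableSet {x : ℝ × ℝ | (x.1, x.2, t) ∈ pyr} :=
    isOpen_pyr.measurableSet.preimage (by fun_prop)
  calc ∫ x : ℝ × ℝ, pyr.indicator f (x.1, x.2, t)
      = ∫ x in ((1 - t) / 2) • sqr, f (x.1, x.2, t) := by
        rw [← slice_pyr_eq_smul_sqr ht, ← integral_indicator hslice]
        rfl
    _ = ((1 - t) / 2) ^ 2 • ∫ x in sqr, f ((1 - t) / 2 * x.1, (1 - t) / 2 * x.2, t) := by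
        have scale := Measure.setIntegral_comp_smul_of_pos volume
          (fun x : ℝ × ℝ => f (x.1, x.2, t)) sqr hα
        simp only [Prod.smul_fst, Prod.smul_snd, smul_eq_mul, Module.finrank_prod,
          Module.finrank_self] at scale
        rw [scale, smul_smul, mul_inv_cancel₀ (by positivity), one_smul]

theorem integral_pyr {E : Type*} [NormedAddCommGroup E] [NormedSpace ℝ E]
    (f : ℝ × ℝ × ℝ → E) (hf : IntegrableOn f pyr) :
    ∫ u in pyr, f u = ∫ t in Ioo (-1) 1,
      ((1 - t) / 2) ^ 2 • ∫ x in sqr, f ((1 - t) / 2 * x.1, (1 - t) / 2 * x.2, t) := by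
  rw [← integral_indicator isOpen_pyr.measurableSet, ← integral_indicator measurableSet_Ioo]
  refine (integral_prod_prod_symm _ (hf.integrable_indicator isOpen_pyr.measurableSet)).trans ?_
  congr 1 with t
  by_cases ht : t ∈ Ioo (-1) 1
  · rw [indicator_of_mem ht]
    exact integral_indicator_pyr_slice f ht
  · have hout : ∀ x : ℝ × ℝ, (x.1, x.2, t) ∉ pyr := fun x hx => ht (abs_lt.1 hx.1)
    simp [indicator_of_notMem ht, indicator_of_notMem (hout _)]

theorem MvPolynomial.totalDegree_aeval_le {σ τ R : Type*} [CommSemiring R]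
    (F : MvPolynomial σ R) (f : σ → MvPolynomial τ R) {n : ℕ}
    (hf : ∀ i, (f i).totalDegree ≤ n) : (aeval f F).totalDegree ≤ F.totalDegree * n := by
  rw [aeval_def, eval₂]
  refine totalDegree_finsetSum_le fun d hd => ?_
  refine (totalDegree_mul _ _).trans ?_
  rw [algebraMap_eq, totalDegree_C, zero_add]
  refine (totalDegree_finsetProd _ _).trans ?_
  calc ∑ i ∈ d.support, (f i ^ d i).totalDegree
      ≤ ∑ i ∈ d.support, d i * n :=
        Finset.sum_le_sum fun i _ => (totalDegree_pow _ _).trans (Nat.mul_le_mul_left _ (hf i))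
    _ = (d.sum fun _ e => e) * n := by rw [Finsupp.sum, Finset.sum_mul]
    _ ≤ F.totalDegree * n := Nat.mul_le_mul_right _ (le_totalDegree hd)

open MvPolynomial in
theorem exists_eval_eq_scaled_slice (p : MvPolynomial (Fin 3) ℝ) (a t : ℝ) :
    ∃ r : MvPolynomial (Fin 2) ℝ, r.totalDegree ≤ p.totalDegree ∧
      ∀ x : ℝ × ℝ, eval ![x.1, x.2] r = eval ![a * x.1, a * x.2, t] p := by
  let f : Fin 3 → MvPolynomial (Fin 2) ℝ := ![C a * X 0, C a * X 1, C t]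
  refine ⟨aeval f p, ?_, fun x => ?_⟩
  · refine (totalDegree_aeval_le p f fun i => ?_).trans_eq (mul_one _)
    fin_cases i <;> simp [f, (totalDegree_mul _ _).trans]
  · have eval_aeval : ∀ q : MvPolynomial (Fin 3) ℝ,
        eval ![x.1, x.2] (aeval f q) = eval (fun i => eval ![x.1, x.2] (f i)) q := by
      intro q
      induction q using MvPolynomial.induction_on <;> simp_all
    have eval_f : (fun i => eval ![x.1, x.2] (f i)) = ![a * x.1, a * x.2, t] := by
      funext i
      fin_cases i <;> simp [f]
    rw [eval_aeval, eval_f]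

open Polynomial in
theorem exists_eval_eq_sqr_rule_on_slice (p : MvPolynomial (Fin 3) ℝ) {n : ℕ}
    (nd : Fin n → ℝ × ℝ) (w : Fin n → ℝ) :
    ∃ g : ℝ[X], g.natDegree ≤ p.totalDegree + 2 ∧ ∀ t, g.eval t = ((1 - t) / 2) ^ 2 *
      ∑ c, w c * MvPolynomial.eval ![(1 - t) / 2 * (nd c).1, (1 - t) / 2 * (nd c).2, t] p := by
  let α : ℝ[X] := C 2⁻¹ * (1 - X)
  let f (c : Fin n) : Fin 3 → ℝ[X] := ![C (nd c).1 * α, C (nd c).2 * α, X]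
  let G : ℝ[X] := ∑ c, C (w c) * MvPolynomial.aeval (f c) p
  have hα : α.natDegree ≤ 1 := by
    simp only [α]
    compute_degree
  refine ⟨α ^ 2 * G, ?_, fun t => ?_⟩
  · have hG : G.natDegree ≤ p.totalDegree := by
      refine natDegree_sum_le_of_forall_le _ _ fun c _ => (natDegree_C_mul_le _ _).trans ?_
      refine (MvPolynomial.aeval_natDegree_le p le_rfl _ fun i => ?_).trans_eq (mul_one _)
      fin_cases i <;> simp [f, (natDegree_C_mul_le _ _).trans hα]
    have hα2 : (α ^ 2).natDegree ≤ 2 := natDegree_pow_le_of_le 2 hα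
    have hmul := natDegree_mul_le (p := α ^ 2) (q := G)
    omega
  · have eval_aeval : ∀ (q : MvPolynomial (Fin 3) ℝ) (h : Fin 3 → ℝ[X]),
        eval t (MvPolynomial.aeval h q) = MvPolynomial.eval (fun i => eval t (h i)) q := by
      intro q h
      induction q using MvPolynomial.induction_on <;> simp_all
    have eval_α : eval t α = (1 - t) / 2 := by simp [α]; ring
    simp only [G, eval_mul, eval_pow, eval_finsetSum, eval_C, eval_aeval, eval_α]
    congr 1
    refine Finset.sum_congr rfl fun c _ => ?_
    congr 3
    funext i
    fin_cases i <;> simp [f, eval_α, mul_comm]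

theorem algebraic_construction_rule_exact_on_pyramid_general
    (q C E : ℕ) (nd : Fin C → ℝ × ℝ) (w : Fin C → ℝ) (z v : Fin E → ℝ)
    (hsqr : ∀ r : MvPolynomial (Fin 2) ℝ, r.totalDegree ≤ q →
      (∫ u in {u : ℝ × ℝ | |u.1| < 1 ∧ |u.2| < 1},
          MvPolynomial.eval ![u.1, u.2] r) =
        ∑ c, w c * MvPolynomial.eval ![(nd c).1, (nd c).2] r)
    (hline : ∀ g : Polynomial ℝ, g.natDegree ≤ q + 2 →
      (∫ x in Set.Ioo (-1 : ℝ) 1, g.eval x) = ∑ e, v e * g.eval (z e)) :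
    ∀ p : MvPolynomial (Fin 3) ℝ, p.totalDegree ≤ q →
      (∫ u in {u : ℝ × ℝ × ℝ |
            |u.2.2| < 1 ∧ |u.1| < (1 - u.2.2) / 2 ∧ |u.2.1| < (1 - u.2.2) / 2},
          MvPolynomial.eval ![u.1, u.2.1, u.2.2] p) =
        ∑ e, ∑ c, ((1 - z e) / 2) ^ 2 * v e * w c *
          MvPolynomial.eval
            ![((1 - z e) / 2) * (nd c).1, ((1 - z e) / 2) * (nd c).2, z e] p := by
  intro p hp
  obtain ⟨g, hg_deg, hg⟩ := exists_eval_eq_sqr_rule_on_slice p nd w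
  have slice (t : ℝ) :
      ∫ x in sqr, MvPolynomial.eval ![(1 - t) / 2 * x.1, (1 - t) / 2 * x.2, t] p =
        ∑ c, w c *
          MvPolynomial.eval ![(1 - t) / 2 * (nd c).1, (1 - t) / 2 * (nd c).2, t] p := by
    obtain ⟨r, hr_deg, hr⟩ := exists_eval_eq_scaled_slice p ((1 - t) / 2) t
    simp_rw [← hr]
    exact hsqr r (hr_deg.trans hp)
  calc (∫ u in pyr, MvPolynomial.eval ![u.1, u.2.1, u.2.2] p)
      = ∫ t in Ioo (-1) 1, g.eval t := by
        have hcont :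
            Continuous fun u : ℝ × ℝ × ℝ => MvPolynomial.eval ![u.1, u.2.1, u.2.2] p :=
          (MvPolynomial.continuous_eval p).comp (by fun_prop)
        rw [integral_pyr _ hcont.integrableOn_pyr]
        simp_rw [slice, hg, smul_eq_mul]
    _ = ∑ e, v e * g.eval (z e) := hline g (by omega)
    _ = _ := by
        simp_rw [hg, Finset.mul_sum]
        exact Finset.sum_congr rfl fun e _ => Finset.sum_congr rfl fun c _ => by ring

/-- The algebraic construction: a degree-`q` exact rule on the square
combined with a degree-`(q+2)` exact rule on `(-1,1)` yields a degree-`q` exact rule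
on the pyramid. -/
theorem algebraic_construction_rule_exact_on_pyramid
    (q C E : ℕ) (nd : Fin C → ℝ × ℝ) (w : Fin C → ℝ) (z v : Fin E → ℝ)
    (hndSqr : ∀ c, |(nd c).1| < 1 ∧ |(nd c).2| < 1)
    (hsqr : ∀ r : MvPolynomial (Fin 2) ℝ, r.totalDegree ≤ q →
      (∫ u in {u : ℝ × ℝ | |u.1| < 1 ∧ |u.2| < 1},
          MvPolynomial.eval ![u.1, u.2] r) =
        ∑ c, w c * MvPolynomial.eval ![(nd c).1, (nd c).2] r)
    (hzLine : ∀ e, z e ∈ Set.Ioo (-1 : ℝ) 1)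
    (hline : ∀ g : Polynomial ℝ, g.natDegree ≤ q + 2 →
      (∫ x in Set.Ioo (-1 : ℝ) 1, g.eval x) = ∑ e, v e * g.eval (z e)) :
    ∀ p : MvPolynomial (Fin 3) ℝ, p.totalDegree ≤ q →
      (∫ u in {u : ℝ × ℝ × ℝ |
            |u.2.2| < 1 ∧ |u.1| < (1 - u.2.2) / 2 ∧ |u.2.1| < (1 - u.2.2) / 2},
          MvPolynomial.eval ![u.1, u.2.1, u.2.2] p) =
        ∑ e, ∑ c, ((1 - z e) / 2) ^ 2 * v e * w c *
          MvPolynomial.eval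
            ![((1 - z e) / 2) * (nd c).1, ((1 - z e) / 2) * (nd c).2, z e] p :=
  algebraic_construction_rule_exact_on_pyramid_general q C E nd w z v hsqr hline
end

section
/- Let q be a natural number and let p be a real polynomial in three variables of total degree at most q. Then the function (x,y,z) ↦ ((1-z)/2)² · p(((1-z)/2)·x, ((1-z)/2)·y, z) coincides with a real polynomial in (x,y,z) of total degree at most 2q + 2, and its integral over the cube equals ∫_{pyr} p(x,y,z) dx dy dz. -/
/-!
Substituting the degree-two polynomials `((1 - z) / 2) x`, `((1 - z) / 2) y`, `z` into `p` at
most doubles its total degree, and the factor `((1 - z) / 2)²` adds two. For the integral, slice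
both solids at height `z` (Fubini): for `|z| < 1` the slice of the pyramid is the slice of the
cube, the square `(-1, 1)²`, scaled by `(1 - z) / 2`, and this linear change of variables in the
plane has Jacobian `((1 - z) / 2)²`.
-/

open MeasureTheory Metric
open scoped Pointwise

section Fubini

variable {α β γ E : Type*} [MeasureSpace α] [MeasureSpace β] [MeasureSpace γ]
  [SigmaFinite (volume : Measure α)] [SigmaFinite (volume : Measure β)]
  [SigmaFinite (volume : Measure γ)] [NormedAddCommGroup E] [NormedSpace ℝ E]

theorem setIntegral_eq_integral_setIntegral_slice {S : Set (α × β × γ)} (hS : MeasurableSet S)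
    {f : α × β × γ → E} (hf : IntegrableOn f S) :
    ∫ u in S, f u =
      ∫ z, ∫ xy in {xy : α × β | (xy.1, xy.2, z) ∈ S}, f (xy.1, xy.2, z) := by
  have hassoc := volume_preserving_prodAssoc (α₁ := α) (β₁ := β) (γ₁ := γ)
  rw [← integral_indicator hS, ← hassoc.integral_comp', Measure.volume_eq_prod,
    integral_prod_symm]
  · congr 1
    funext z
    have hslice : MeasurableSet {xy : α × β | (xy.1, xy.2, z) ∈ S} :=
      hS.preimage (f := fun xy : α × β => (xy.1, xy.2, z)) (by fun_prop)
    rw [← integral_indicator hslice]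
    rfl
  · exact (hassoc.integrable_comp_emb (MeasurableEquiv.measurableEmbedding _)).2
      ((integrable_indicator_iff hS).2 hf)

end Fubini

namespace MvPolynomial

theorem totalDegree_bind₁_le {σ τ R : Type*} [CommSemiring R] {k : ℕ}
    {g : σ → MvPolynomial τ R} (hg : ∀ i, (g i).totalDegree ≤ k) (p : MvPolynomial σ R) :
    (bind₁ g p).totalDegree ≤ k * p.totalDegree := by
  conv_lhs => rw [p.as_sum, map_sum]
  refine totalDegree_finsetSum_le fun m hm => ?_
  rw [bind₁_monomial, C_mul']
  calc (coeff m p • ∏ i ∈ m.support, g i ^ m i).totalDegree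
      ≤ ∑ i ∈ m.support, (g i ^ m i).totalDegree :=
        (totalDegree_smul_le _ _).trans (totalDegree_finsetProd _ _)
    _ ≤ ∑ i ∈ m.support, k * m i :=
        Finset.sum_le_sum fun i _ =>
          (totalDegree_pow _ _).trans (by rw [mul_comm]; gcongr; exact hg i)
    _ ≤ k * p.totalDegree := by
        rw [← Finset.mul_sum]
        exact Nat.mul_le_mul_left _ (le_totalDegree hm)

end MvPolynomial

open MvPolynomial

noncomputable def duffyScale : MvPolynomial (Fin 3) ℝ := C 2⁻¹ * (1 - X 2)

noncomputable def duffyPoly (p : MvPolynomial (Fin 3) ℝ) : MvPolynomial (Fin 3) ℝ :=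
  duffyScale ^ 2 * bind₁ ![duffyScale * X 0, duffyScale * X 1, X 2] p

theorem eval_duffyScale (v : Fin 3 → ℝ) : eval v duffyScale = (1 - v 2) / 2 := by
  simp [duffyScale]; ring

theorem totalDegree_duffyScale_le : duffyScale.totalDegree ≤ 1 := by
  rw [duffyScale, C_mul']
  refine (totalDegree_smul_le _ _).trans ((totalDegree_sub _ _).trans ?_)
  simp [totalDegree_X]

theorem eval_duffyPoly (p : MvPolynomial (Fin 3) ℝ) (x y z : ℝ) :
    eval ![x, y, z] (duffyPoly p) =
      ((1 - z) / 2) ^ 2 * eval ![((1 - z) / 2) * x, ((1 - z) / 2) * y, z] p := by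
  rw [duffyPoly, map_mul, map_pow, eval_duffyScale, eval, eval₂Hom_bind₁, ← eval, ← eval]
  congr 3
  funext i
  fin_cases i <;> simp [eval_duffyScale]

theorem totalDegree_duffyPoly_le (p : MvPolynomial (Fin 3) ℝ) :
    (duffyPoly p).totalDegree ≤ 2 * p.totalDegree + 2 := by
  have hsubst : ∀ i, (![duffyScale * X 0, duffyScale * X 1, X 2] i).totalDegree ≤ 2 := by
    intro i
    fin_cases i
    all_goals simp only [Fin.zero_eta, Fin.mk_one, Fin.reduceFinMk, Matrix.cons_val]
    · exact (totalDegree_mul _ _).trans (by simp [totalDegree_X, totalDegree_duffyScale_le])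
    · exact (totalDegree_mul _ _).trans (by simp [totalDegree_X, totalDegree_duffyScale_le])
    · simp [totalDegree_X]
  calc (duffyPoly p).totalDegree
      ≤ 2 * duffyScale.totalDegree + 2 * p.totalDegree :=
        (totalDegree_mul _ _).trans
          (add_le_add (totalDegree_pow _ _) (totalDegree_bind₁_le hsubst p))
    _ ≤ 2 * p.totalDegree + 2 := by linarith [totalDegree_duffyScale_le]

def cube : Set (ℝ × ℝ × ℝ) := {u | |u.1| < 1 ∧ |u.2.1| < 1 ∧ |u.2.2| < 1}

def pyramid : Set (ℝ × ℝ × ℝ) :=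
  {u | |u.2.2| < 1 ∧ |u.1| < (1 - u.2.2) / 2 ∧ |u.2.1| < (1 - u.2.2) / 2}

theorem cube_eq_ball : cube = ball (0 : ℝ × ℝ × ℝ) 1 := by
  ext u
  simp [cube, Prod.norm_def]

theorem pyramid_subset_cube : pyramid ⊆ cube := by
  rintro u ⟨hz, hx, hy⟩
  have hs : (1 - u.2.2) / 2 < 1 := by linarith [neg_abs_le u.2.2]
  exact ⟨hx.trans hs, hy.trans hs, hz⟩

theorem measurableSet_cube : MeasurableSet cube :=
  cube_eq_ball ▸ measurableSet_ball

theorem measurableSet_pyramid : MeasurableSet pyramid := by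
  rw [pyramid, Set.ofPred_and, Set.ofPred_and]
  exact (measurableSet_lt (by fun_prop) measurable_const).inter
    ((measurableSet_lt (by fun_prop) (by fun_prop)).inter
      (measurableSet_lt (by fun_prop) (by fun_prop)))

theorem Continuous.integrableOn_cube {f : ℝ × ℝ × ℝ → ℝ} (hf : Continuous f) :
    IntegrableOn f cube :=
  (hf.continuousOn.integrableOn_compact (isCompact_closedBall 0 1)).mono_set
    (cube_eq_ball ▸ ball_subset_closedBall)

theorem cube_slice_of_abs_lt {z : ℝ} (hz : |z| < 1) :
    {xy : ℝ × ℝ | (xy.1, xy.2, z) ∈ cube} = ball (0 : ℝ × ℝ) 1 := by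
  ext xy
  simp [cube, hz, Prod.norm_def]

theorem pyramid_slice_of_abs_lt {z : ℝ} (hz : |z| < 1) :
    {xy : ℝ × ℝ | (xy.1, xy.2, z) ∈ pyramid} =
      ((1 - z) / 2) • ball (0 : ℝ × ℝ) 1 := by
  have hs : 0 < (1 - z) / 2 := by linarith [le_abs_self z]
  rw [_root_.smul_ball hs.ne', smul_zero, Real.norm_of_nonneg hs.le, mul_one]
  ext xy
  simp [pyramid, hz, Prod.norm_def]

theorem setIntegral_cube_slice_eq_setIntegral_pyramid_slice
    (f : ℝ × ℝ × ℝ → ℝ) (z : ℝ) :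
    ∫ xy in {xy : ℝ × ℝ | (xy.1, xy.2, z) ∈ cube},
        ((1 - z) / 2) ^ 2 * f ((1 - z) / 2 * xy.1, (1 - z) / 2 * xy.2, z) =
      ∫ xy in {xy : ℝ × ℝ | (xy.1, xy.2, z) ∈ pyramid}, f (xy.1, xy.2, z) := by
  by_cases hz : |z| < 1
  · have hs : 0 < (1 - z) / 2 := by linarith [le_abs_self z]
    have hscale := Measure.setIntegral_comp_smul_of_pos volume
      (fun xy : ℝ × ℝ => f (xy.1, xy.2, z)) (ball 0 1) hs
    simp only [Prod.smul_fst, Prod.smul_snd, smul_eq_mul, Module.finrank_prod,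
      Module.finrank_self] at hscale
    rw [cube_slice_of_abs_lt hz, pyramid_slice_of_abs_lt hz, integral_const_mul, hscale,
      ← mul_assoc, mul_inv_cancel₀ (by positivity), one_mul]
  · simp [cube, pyramid, hz]

theorem setIntegral_duffy_cube_eq_setIntegral_pyramid {f : ℝ × ℝ × ℝ → ℝ}
    (hf : Continuous f) :
    ∫ u in cube, ((1 - u.2.2) / 2) ^ 2 *
        f ((1 - u.2.2) / 2 * u.1, (1 - u.2.2) / 2 * u.2.1, u.2.2) =
      ∫ u in pyramid, f u := by
  rw [setIntegral_eq_integral_setIntegral_slice measurableSet_cube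
    (Continuous.integrableOn_cube (by fun_prop)),
    setIntegral_eq_integral_setIntegral_slice measurableSet_pyramid
      (hf.integrableOn_cube.mono_set pyramid_subset_cube)]
  congr 1
  funext z
  exact setIntegral_cube_slice_eq_setIntegral_pyramid_slice f z

/-- The Duffy-type integrand `((1-z)/2)² · p(((1-z)/2)x, ((1-z)/2)y, z)`
associated with a trivariate polynomial `p` of total degree at most `q` is a polynomial
of total degree at most `2q + 2`, and its integral over the cube equals the integral of
`p` over the pyramid. -/
theorem duffy_integrand_polynomial_and_integral
    (q : ℕ) (p : MvPolynomial (Fin 3) ℝ) (hp : p.totalDegree ≤ q) :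
    (∃ r : MvPolynomial (Fin 3) ℝ, r.totalDegree ≤ 2 * q + 2 ∧
      ∀ x y z : ℝ, MvPolynomial.eval ![x, y, z] r =
        ((1 - z) / 2) ^ 2 *
          MvPolynomial.eval ![((1 - z) / 2) * x, ((1 - z) / 2) * y, z] p) ∧
    (∫ u in {u : ℝ × ℝ × ℝ | |u.1| < 1 ∧ |u.2.1| < 1 ∧ |u.2.2| < 1},
        ((1 - u.2.2) / 2) ^ 2 *
          MvPolynomial.eval
            ![((1 - u.2.2) / 2) * u.1, ((1 - u.2.2) / 2) * u.2.1, u.2.2] p) =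
      ∫ u in {u : ℝ × ℝ × ℝ |
          |u.2.2| < 1 ∧ |u.1| < (1 - u.2.2) / 2 ∧ |u.2.1| < (1 - u.2.2) / 2},
        MvPolynomial.eval ![u.1, u.2.1, u.2.2] p :=
  ⟨⟨duffyPoly p, (totalDegree_duffyPoly_le p).trans (by omega), eval_duffyPoly p⟩,
    setIntegral_duffy_cube_eq_setIntegral_pyramid
      ((continuous_eval p).comp
        (by fun_prop : Continuous fun u : ℝ × ℝ × ℝ => ![u.1, u.2.1, u.2.2]))⟩
end

section
/- Let q be a natural number and let {(x_j, y_j, z_j, w_j)}_{j=1}^n be a quadrature rule on the cube that is exact of degree 2q + 2, i.e. ∫_{cube} r = Σ_j w_j r(x_j, y_j, z_j) for every trivariate real polynomial r of total degree at most 2q + 2. Writing α_j = (1 - z_j)/2, the Duffy-transformed rule {(α_j x_j, α_j y_j, z_j, α_j² w_j)}_{j=1}^n is exact of degree q on the pyramid: for every trivariate real polynomial p of total degree at most q, ∫_{pyr} p = Σ_{j=1}^n α_j² w_j p(α_j x_j, α_j y_j, z_j). -/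
open MeasureTheory

open Set MvPolynomial

/-!
The Duffy map `(x, y, z) ↦ ((1 - z)/2 · x, (1 - z)/2 · y, z)` is a bijection from the cube onto
the pyramid with Jacobian determinant `((1 - z)/2)²`, so by the change of variables formula
`∫_pyr p = ∫_cube ((1 - z)/2)² · (p ∘ Duffy)`. For `deg p ≤ q` the integrand on the right is a
polynomial of degree at most `2q + 2`, which the cube rule integrates exactly; its values at the
cube nodes are the weights times the values of `p` at the transformed nodes.
-/

def MeasurableEquiv.finThreeArrow (α : Type*) [MeasurableSpace α] :
    (Fin 3 → α) ≃ᵐ α × α × α :=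
  (piFinSuccAbove (fun _ => α) 0).trans (prodCongr (refl α) finTwoArrow)

theorem MeasurableEquiv.finThreeArrow_symm_apply {α : Type*} [MeasurableSpace α]
    (u : α × α × α) : (finThreeArrow α).symm u = ![u.1, u.2.1, u.2.2] := by
  ext i; fin_cases i <;> rfl

theorem MeasureTheory.volume_preserving_finThreeArrow (α : Type*) [MeasureSpace α]
    [SigmaFinite (volume : Measure α)] :
    MeasurePreserving (MeasurableEquiv.finThreeArrow α) volume volume :=
  (volume_preserving_piFinSuccAbove (fun _ => α) 0).trans
    ((MeasurePreserving.id volume).prod (volume_preserving_finTwoArrow α))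

theorem MeasureTheory.setIntegral_comp_vecCons_three {α E : Type*} [MeasureSpace α]
    [SigmaFinite (volume : Measure α)] [NormedAddCommGroup E] [NormedSpace ℝ E]
    (g : (Fin 3 → α) → E) (s : Set (α × α × α)) :
    ∫ u in s, g ![u.1, u.2.1, u.2.2] = ∫ v in MeasurableEquiv.finThreeArrow α ⁻¹' s, g v := by
  simp_rw [← MeasurableEquiv.finThreeArrow_symm_apply]
  exact ((volume_preserving_finThreeArrow α).setIntegral_preimage_emb
    (MeasurableEquiv.measurableEmbedding _) _ s).symm.trans (by simp)

theorem MvPolynomial.totalDegree_bind₁_le_s8 {σ τ R : Type*} [CommSemiring R]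
    {g : σ → MvPolynomial τ R} {d : ℕ} (hg : ∀ i, (g i).totalDegree ≤ d)
    (p : MvPolynomial σ R) : (bind₁ g p).totalDegree ≤ d * p.totalDegree := by
  conv_lhs => rw [p.as_sum, map_sum]
  refine (totalDegree_finsetSum _ _).trans (Finset.sup_le fun m hm => ?_)
  rw [bind₁_monomial]
  refine (totalDegree_mul _ _).trans ?_
  rw [totalDegree_C, zero_add]
  refine (totalDegree_finsetProd _ _).trans ?_
  calc ∑ i ∈ m.support, (g i ^ m i).totalDegree
      ≤ ∑ i ∈ m.support, d * m i := Finset.sum_le_sum fun i _ =>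
        (totalDegree_pow _ _).trans (by rw [mul_comm]; gcongr; exact hg i)
    _ = d * ∑ i ∈ m.support, m i := by rw [Finset.mul_sum]
    _ ≤ d * p.totalDegree := Nat.mul_le_mul_left _ (le_totalDegree hm)

namespace Duffy

noncomputable section

def cube : Set (Fin 3 → ℝ) := {v | |v 0| < 1 ∧ |v 1| < 1 ∧ |v 2| < 1}

def pyramid : Set (Fin 3 → ℝ) :=
  {v | |v 2| < 1 ∧ |v 0| < (1 - v 2) / 2 ∧ |v 1| < (1 - v 2) / 2}

def transform (v : Fin 3 → ℝ) : Fin 3 → ℝ :=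
  ![(1 - v 2) / 2 * v 0, (1 - v 2) / 2 * v 1, v 2]

def fderivTransform (v : Fin 3 → ℝ) : (Fin 3 → ℝ) →L[ℝ] (Fin 3 → ℝ) :=
  (Matrix.toLin' !![(1 - v 2) / 2, 0, -v 0 / 2;
                    0, (1 - v 2) / 2, -v 1 / 2;
                    0, 0, 1]).toContinuousLinearMap

theorem hasFDerivAt_transform (v : Fin 3 → ℝ) : HasFDerivAt transform (fderivTransform v) v := by
  have hcoord (k : Fin 3) := hasFDerivAt_apply (𝕜 := ℝ) (F' := fun _ : Fin 3 => ℝ) k v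
  have hscale := ((hcoord 2).const_sub 1).mul_const (2⁻¹ : ℝ)
  rw [hasFDerivAt_pi']
  intro i
  fin_cases i
  · refine (hscale.mul (hcoord 0)).congr_fderiv ?_
    ext
    simp [fderivTransform, dotProduct, Fin.sum_univ_three, div_eq_mul_inv, mul_assoc]
  · refine (hscale.mul (hcoord 1)).congr_fderiv ?_
    ext
    simp [fderivTransform, dotProduct, Fin.sum_univ_three, div_eq_mul_inv, mul_assoc]
  · refine (hcoord 2).congr_fderiv ?_
    ext
    simp [fderivTransform, dotProduct, Fin.sum_univ_three]

theorem det_fderivTransform (v : Fin 3 → ℝ) :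
    (fderivTransform v).det = ((1 - v 2) / 2) ^ 2 := by
  simp only [fderivTransform, LinearMap.det_toContinuousLinearMap, LinearMap.det_toLin',
    Matrix.det_fin_three, Matrix.of_apply, Matrix.cons_val', Matrix.cons_val_zero,
    Matrix.cons_val_one, Matrix.cons_val, Matrix.cons_val_fin_one]
  ring

theorem injOn_transform : InjOn transform {v | v 2 ≠ 1} := by
  intro v hv w _ h
  have h2 : v 2 = w 2 := congrFun h 2
  have hscale : (1 - v 2) / 2 ≠ 0 := div_ne_zero (sub_ne_zero.2 (Ne.symm hv)) two_ne_zero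
  have h0 : v 0 = w 0 := mul_left_cancel₀ hscale (by simpa [transform, h2] using congrFun h 0)
  have h1 : v 1 = w 1 := mul_left_cancel₀ hscale (by simpa [transform, h2] using congrFun h 1)
  ext i; fin_cases i <;> assumption

theorem image_transform_cube : transform '' cube = pyramid := by
  ext w
  constructor
  · rintro ⟨v, ⟨h0, h1, h2⟩, rfl⟩
    have hscale : 0 < (1 - v 2) / 2 := by linarith [(abs_lt.1 h2).2]
    refine ⟨h2, ?_, ?_⟩ <;> simp only [transform, Matrix.cons_val, abs_mul, abs_of_pos hscale]
    · exact mul_lt_of_lt_one_right hscale h0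
    · exact mul_lt_of_lt_one_right hscale h1
  · rintro ⟨h2, h0, h1⟩
    have hscale : 0 < (1 - w 2) / 2 := (abs_nonneg _).trans_lt h0
    refine ⟨![w 0 / ((1 - w 2) / 2), w 1 / ((1 - w 2) / 2), w 2], ⟨?_, ?_, h2⟩, ?_⟩
    · simpa [abs_div, abs_of_pos hscale, div_lt_one hscale] using h0
    · simpa [abs_div, abs_of_pos hscale, div_lt_one hscale] using h1
    · ext i
      fin_cases i <;> simp [transform, mul_div_cancel₀ _ hscale.ne']

theorem integral_pyramid_eq_integral_cube (g : (Fin 3 → ℝ) → ℝ) :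
    ∫ v in pyramid, g v = ∫ v in cube, ((1 - v 2) / 2) ^ 2 * g (transform v) := by
  have hcube : MeasurableSet cube := by unfold cube; measurability
  rw [← image_transform_cube, integral_image_eq_integral_abs_det_fderiv_smul volume hcube
    (fun v _ => (hasFDerivAt_transform v).hasFDerivWithinAt)
    (injOn_transform.mono fun v hv => (abs_lt.1 hv.2.2).2.ne) g]
  simp [det_fderivTransform]

def scalePoly : MvPolynomial (Fin 3) ℝ := C (1 / 2) * (1 - X 2)

def transformPoly : Fin 3 → MvPolynomial (Fin 3) ℝ := ![scalePoly * X 0, scalePoly * X 1, X 2]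

def pullback (p : MvPolynomial (Fin 3) ℝ) : MvPolynomial (Fin 3) ℝ :=
  scalePoly ^ 2 * bind₁ transformPoly p

theorem eval_scalePoly (v : Fin 3 → ℝ) : eval v scalePoly = (1 - v 2) / 2 := by
  simp [scalePoly, div_eq_inv_mul]

theorem eval_pullback (p : MvPolynomial (Fin 3) ℝ) (v : Fin 3 → ℝ) :
    eval v (pullback p) = ((1 - v 2) / 2) ^ 2 * eval (transform v) p := by
  have hcomp : (fun i => eval v (transformPoly i)) = transform v := by
    ext i; fin_cases i <;> simp [transformPoly, transform, eval_scalePoly]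
  have hbind : eval v (bind₁ transformPoly p) = eval (fun i => eval v (transformPoly i)) p :=
    eval₂Hom_bind₁ _ _ _ _
  rw [pullback, map_mul, map_pow, eval_scalePoly, hbind, hcomp]

theorem eval_vecCons_pullback (p : MvPolynomial (Fin 3) ℝ) (x y z : ℝ) :
    eval ![x, y, z] (pullback p) =
      ((1 - z) / 2) ^ 2 * eval ![(1 - z) / 2 * x, (1 - z) / 2 * y, z] p :=
  eval_pullback p ![x, y, z]

theorem totalDegree_scalePoly_le : scalePoly.totalDegree ≤ 1 := by
  refine (totalDegree_mul _ _).trans ?_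
  rw [totalDegree_C, zero_add]
  refine (totalDegree_sub _ _).trans ?_
  simp [totalDegree_X]

theorem totalDegree_transformPoly_le (i : Fin 3) : (transformPoly i).totalDegree ≤ 2 := by
  have hmulX (k : Fin 3) : (scalePoly * X k).totalDegree ≤ 2 :=
    (totalDegree_mul _ _).trans (by rw [totalDegree_X]; have := totalDegree_scalePoly_le; omega)
  fin_cases i
  · exact hmulX 0
  · exact hmulX 1
  · simp [transformPoly, totalDegree_X]

theorem totalDegree_pullback_le (p : MvPolynomial (Fin 3) ℝ) :
    (pullback p).totalDegree ≤ 2 * p.totalDegree + 2 := by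
  have hsq : (scalePoly ^ 2).totalDegree ≤ 2 :=
    (totalDegree_pow _ _).trans (by have := totalDegree_scalePoly_le; omega)
  have hbind := totalDegree_bind₁_le_s8 totalDegree_transformPoly_le p
  exact (totalDegree_mul _ _).trans (by omega)

end

end Duffy

theorem duffy_transformed_rule_exact_on_pyramid_general
    (q n : ℕ) (nd : Fin n → ℝ × ℝ × ℝ) (w : Fin n → ℝ)
    (hcube : ∀ r : MvPolynomial (Fin 3) ℝ, r.totalDegree ≤ 2 * q + 2 →
      (∫ u in {u : ℝ × ℝ × ℝ | |u.1| < 1 ∧ |u.2.1| < 1 ∧ |u.2.2| < 1},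
          MvPolynomial.eval ![u.1, u.2.1, u.2.2] r) =
        ∑ j, w j * MvPolynomial.eval ![(nd j).1, (nd j).2.1, (nd j).2.2] r) :
    ∀ p : MvPolynomial (Fin 3) ℝ, p.totalDegree ≤ q →
      (∫ u in {u : ℝ × ℝ × ℝ |
            |u.2.2| < 1 ∧ |u.1| < (1 - u.2.2) / 2 ∧ |u.2.1| < (1 - u.2.2) / 2},
          MvPolynomial.eval ![u.1, u.2.1, u.2.2] p) =
        ∑ j, ((1 - (nd j).2.2) / 2) ^ 2 * w j *
          MvPolynomial.eval
            ![((1 - (nd j).2.2) / 2) * (nd j).1,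
              ((1 - (nd j).2.2) / 2) * (nd j).2.1, (nd j).2.2] p := by
  intro p hp
  have hdeg : (Duffy.pullback p).totalDegree ≤ 2 * q + 2 :=
    (Duffy.totalDegree_pullback_le p).trans (by omega)
  calc _ = ∫ v in Duffy.pyramid, eval v p := setIntegral_comp_vecCons_three (eval · p) _
    _ = ∫ v in Duffy.cube, eval v (Duffy.pullback p) := by
      simp_rw [Duffy.integral_pyramid_eq_integral_cube, Duffy.eval_pullback]
    _ = ∫ u in {u : ℝ × ℝ × ℝ | |u.1| < 1 ∧ |u.2.1| < 1 ∧ |u.2.2| < 1},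
          eval ![u.1, u.2.1, u.2.2] (Duffy.pullback p) := by
      symm; exact setIntegral_comp_vecCons_three (eval · (Duffy.pullback p)) _
    _ = ∑ j, w j * eval ![(nd j).1, (nd j).2.1, (nd j).2.2] (Duffy.pullback p) := hcube _ hdeg
    _ = _ := Finset.sum_congr rfl fun j _ => by
      rw [Duffy.eval_vecCons_pullback]
      ring

/-- A degree-`(2q+2)` exact quadrature rule on the cube yields, via the
Duffy transformation, a degree-`q` exact quadrature rule on the pyramid. -/
theorem duffy_transformed_rule_exact_on_pyramid
    (q n : ℕ) (nd : Fin n → ℝ × ℝ × ℝ) (w : Fin n → ℝ)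
    (hndCube : ∀ j, |(nd j).1| < 1 ∧ |(nd j).2.1| < 1 ∧ |(nd j).2.2| < 1)
    (hcube : ∀ r : MvPolynomial (Fin 3) ℝ, r.totalDegree ≤ 2 * q + 2 →
      (∫ u in {u : ℝ × ℝ × ℝ | |u.1| < 1 ∧ |u.2.1| < 1 ∧ |u.2.2| < 1},
          MvPolynomial.eval ![u.1, u.2.1, u.2.2] r) =
        ∑ j, w j * MvPolynomial.eval ![(nd j).1, (nd j).2.1, (nd j).2.2] r) :
    ∀ p : MvPolynomial (Fin 3) ℝ, p.totalDegree ≤ q →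
      (∫ u in {u : ℝ × ℝ × ℝ |
            |u.2.2| < 1 ∧ |u.1| < (1 - u.2.2) / 2 ∧ |u.2.1| < (1 - u.2.2) / 2},
          MvPolynomial.eval ![u.1, u.2.1, u.2.2] p) =
        ∑ j, ((1 - (nd j).2.2) / 2) ^ 2 * w j *
          MvPolynomial.eval
            ![((1 - (nd j).2.2) / 2) * (nd j).1,
              ((1 - (nd j).2.2) / 2) * (nd j).2.1, (nd j).2.2] p :=
  duffy_transformed_rule_exact_on_pyramid_general q n nd w hcube
end
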